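/- arXiv:2104.02029 — 2 statements merged into one kernel-verified Lean document; each statement's English description precedes it below -/
import Mathlib

section
/- Let h be a bounded self-adjoint operator on ℂ^{2N} ⊗ H with chiral symmetry J h J⁻¹ = −h (J = diag(1_N, −1_N) ⊗ id), and suppose 0 is not in the spectrum of h. Let p be the spectral projection of h onto the negative spectrum. Then p has the block form p = (1/2)[[1_N, −u*],[−u, 1_N]] for a unique unitary operator u on ℂ^N ⊗ H. -/
/-!
Since `0 ∉ σ(h)`, the step function `χ_{(-∞,0)}` is continuous on `σ(h)`, so `p` is a self-adjoint
idempotent, and the functional calculus commutes with conjugation by the self-adjoint unitary `J`: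
`J p J = χ(-h) = 1 - p`. In block form this says that both diagonal blocks of `p` are `1/2`.
Self-adjointness of `p` makes its upper-right block the adjoint of its lower-left block `c`, and
`p² = p` then gives `c* c = c c* = 1/4`, so `u = -2c` is the unique unitary that works.
-/

open ContinuousLinearMap WithLp

noncomputable def negStep (t : ℝ) : ℝ := if t < 0 then 1 else 0

lemma continuousOn_negStep : ContinuousOn negStep {0}ᶜ := by
  intro t ht
  refine ContinuousAt.continuousWithinAt ?_
  rcases lt_or_gt_of_ne (show t ≠ 0 from ht) with ht | ht
  · refine Filter.EventuallyEq.continuousAt (y := 1) ?_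
    filter_upwards [Iio_mem_nhds ht] with s hs
    simp [negStep, Set.mem_Iio.mp hs]
  · refine Filter.EventuallyEq.continuousAt (y := 0) ?_
    filter_upwards [Ioi_mem_nhds ht] with s hs
    simp [negStep, (Set.mem_Ioi.mp hs).not_gt]

lemma negStep_neg {t : ℝ} (ht : t ≠ 0) : negStep (-t) = 1 - negStep t := by
  rcases lt_or_gt_of_ne ht with ht | ht <;> simp [negStep, ht, ht.not_gt]

section CFC

variable {A : Type*} [CStarAlgebra A] {a : A}

lemma spectrum_subset_compl_zero (ha : IsUnit a) : spectrum ℝ a ⊆ {0}ᶜ :=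
  fun _ ht h0 => (spectrum.zero_notMem_iff ℝ).mpr ha (Set.mem_singleton_iff.mp h0 ▸ ht)

lemma isStarProjection_cfc_negStep (ha : IsUnit a) : IsStarProjection (cfc negStep a) := by
  have hf := continuousOn_negStep.mono (spectrum_subset_compl_zero ha)
  refine ⟨?_, cfc_predicate _ _⟩
  rw [IsIdempotentElem, ← cfc_mul _ _ a hf hf]
  exact cfc_congr fun t _ => by by_cases ht : t < 0 <;> simp [negStep, ht]

lemma cfc_negStep_neg (ha : IsUnit a) (hsa : IsSelfAdjoint a) :
    cfc negStep (-a) = 1 - cfc negStep a := by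
  have hf := continuousOn_negStep.mono (spectrum_subset_compl_zero ha)
  have hf' : ContinuousOn negStep ((-·) '' spectrum ℝ a) :=
    continuousOn_negStep.mono <| by
      rintro _ ⟨t, ht, rfl⟩
      simpa using spectrum_subset_compl_zero ha ht
  rw [← cfc_comp_neg negStep a hf', ← cfc_const_one ℝ a, ← cfc_sub _ _ a continuousOn_const hf]
  exact cfc_congr fun t ht => negStep_neg (spectrum_subset_compl_zero ha ht)

lemma conj_cfc_negStep_of_conj_eq_neg (ha : IsUnit a) (hsa : IsSelfAdjoint a) (u : unitary A)
    (hu : u * a * star (u : A) = -a) :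
    u * cfc negStep a * star (u : A) = 1 - cfc negStep a := by
  have hφ := (Unitary.conjStarAlgAut ℂ A u : A →⋆ₐ[ℂ] A).map_cfc negStep a
    (continuousOn_negStep.mono (spectrum_subset_compl_zero ha))
    ((continuous_const_mul _).mul continuous_const) hsa
  change (u : A) * cfc negStep a * star (u : A) = cfc negStep ((u : A) * a * star (u : A)) at hφ
  rw [hφ, hu, cfc_negStep_neg ha hsa]

end CFC

lemma WithLp.toLp_fst_snd {q : ENNReal} {α β : Type*} (v : WithLp q (α × β)) :
    toLp q (v.fst, v.snd) = v :=
  rfl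

section Blocks

variable {𝕜 E F : Type*} [RCLike 𝕜]
  [NormedAddCommGroup E] [InnerProductSpace 𝕜 E] [NormedAddCommGroup F] [InnerProductSpace 𝕜 F]

def lowerLeft (T : WithLp 2 (E × F) →L[𝕜] WithLp 2 (E × F)) : E →L[𝕜] F :=
  sndL 2 𝕜 E F ∘L T ∘L (prodContinuousLinearEquiv 2 𝕜 E F).symm.toContinuousLinearMap ∘L
    inl 𝕜 E F

def upperRight (T : WithLp 2 (E × F) →L[𝕜] WithLp 2 (E × F)) : F →L[𝕜] E :=
  fstL 2 𝕜 E F ∘L T ∘L (prodContinuousLinearEquiv 2 𝕜 E F).symm.toContinuousLinearMap ∘L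
    inr 𝕜 E F

variable {T J p : WithLp 2 (E × F) →L[𝕜] WithLp 2 (E × F)}

lemma lowerLeft_apply (x : E) : lowerLeft T x = (T (toLp 2 (x, 0))).snd := rfl

lemma upperRight_apply (y : F) : upperRight T y = (T (toLp 2 (0, y))).fst := rfl

lemma adjoint_lowerLeft [CompleteSpace E] [CompleteSpace F] :
    adjoint (lowerLeft T) = upperRight (adjoint T) := by
  refine ((eq_adjoint_iff _ _).mpr fun y x => ?_).symm
  simpa [upperRight_apply, lowerLeft_apply] using
    adjoint_inner_left T (toLp 2 (x, 0)) (toLp 2 (0, y))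

lemma apply_toLp_eq_add (x : E) (y : F) :
    T (toLp 2 (x, y)) = T (toLp 2 (x, 0)) + T (toLp 2 (0, y)) := by
  rw [← map_add, ← toLp_add, Prod.mk_add_mk, add_zero, zero_add]

section Grading

variable (hJ : ∀ x y, J (toLp 2 (x, y)) = toLp 2 (x, -y))
include hJ

lemma grading_apply (v : WithLp 2 (E × F)) : J v = toLp 2 (v.fst, -v.snd) := by
  simpa only [toLp_fst_snd] using hJ v.fst v.snd

lemma grading_mul_self : J * J = 1 := by
  ext1 v
  simp [grading_apply hJ, toLp_fst_snd]

lemma isSelfAdjoint_grading [CompleteSpace E] [CompleteSpace F] : IsSelfAdjoint J := by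
  refine ((eq_adjoint_iff J J).mpr fun v w => ?_).symm
  simp [grading_apply hJ]

lemma grading_mem_unitary [CompleteSpace E] [CompleteSpace F] : J ∈ unitary _ := by
  rw [Unitary.mem_iff, (isSelfAdjoint_grading hJ).star_eq, and_self]
  exact grading_mul_self hJ

variable (hpJ : J * p * J = 1 - p)
include hpJ

/- The diagonal blocks of `J p J` are those of `p`, so `J p J = 1 - p` makes them `1/2`. -/
lemma apply_toLp_inl (x : E) : p (toLp 2 (x, 0)) = toLp 2 ((2⁻¹ : 𝕜) • x, lowerLeft p x) := by
  have hfix : J (toLp 2 (x, 0)) = toLp 2 (x, 0) := by simpa using hJ x 0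
  have hconj : J (p (J (toLp 2 (x, 0)))) = _ := congr($hpJ (toLp 2 (x, 0)))
  have key := congr(($hconj).fst)
  simp only [hfix, grading_apply hJ, sub_apply, one_apply_eq_self, toLp_fst, sub_fst] at key
  rw [← toLp_fst_snd (p _), lowerLeft_apply]
  congr 2
  linear_combination (norm := module) (2⁻¹ : 𝕜) • key

lemma apply_toLp_inr (y : F) : p (toLp 2 (0, y)) = toLp 2 (upperRight p y, (2⁻¹ : 𝕜) • y) := by
  have hflip : J (toLp 2 (0, y)) = -toLp 2 (0, y) := by
    rw [hJ, ← toLp_neg, Prod.neg_mk, neg_zero]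
  have hconj : J (p (J (toLp 2 (0, y)))) = _ := congr($hpJ (toLp 2 (0, y)))
  have key := congr(($hconj).snd)
  simp only [hflip, map_neg, grading_apply hJ, sub_apply, one_apply_eq_self, toLp_snd, sub_snd,
    neg_snd] at key
  rw [← toLp_fst_snd (p _), upperRight_apply]
  congr 2
  linear_combination (norm := module) (2⁻¹ : 𝕜) • key

lemma apply_toLp_block (x : E) (y : F) :
    p (toLp 2 (x, y)) = toLp 2 ((2⁻¹ : 𝕜) • x + upperRight p y, lowerLeft p x + (2⁻¹ : 𝕜) • y) := by
  rw [apply_toLp_eq_add, apply_toLp_inl hJ hpJ, apply_toLp_inr hJ hpJ, ← toLp_add, Prod.mk_add_mk]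

variable (hpp : IsIdempotentElem p)
include hpp

lemma upperRight_comp_lowerLeft : upperRight p ∘L lowerLeft p = (4⁻¹ : 𝕜) • 1 := by
  ext x
  have hidem : p (p (toLp 2 (x, 0))) = p (toLp 2 (x, 0)) := congr($hpp _)
  rw [apply_toLp_inl hJ hpJ, apply_toLp_block hJ hpJ] at hidem
  have key := congr(($hidem).fst)
  simp only [toLp_fst] at key
  simp only [comp_apply, smul_apply, one_apply_eq_self]
  linear_combination (norm := module) key

lemma lowerLeft_comp_upperRight : lowerLeft p ∘L upperRight p = (4⁻¹ : 𝕜) • 1 := by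
  ext y
  have hidem : p (p (toLp 2 (0, y))) = p (toLp 2 (0, y)) := congr($hpp _)
  rw [apply_toLp_inr hJ hpJ, apply_toLp_block hJ hpJ] at hidem
  have key := congr(($hidem).snd)
  simp only [toLp_snd] at key
  simp only [comp_apply, smul_apply, one_apply_eq_self]
  linear_combination (norm := module) key

end Grading

theorem IsStarProjection.existsUnique_unitary_block [CompleteSpace E] [CompleteSpace F]
    (hp : IsStarProjection p) (hJ : ∀ x y, J (toLp 2 (x, y)) = toLp 2 (x, -y))
    (hpJ : J * p * J = 1 - p) :
    ∃! u : E →L[𝕜] F, (adjoint u ∘L u = 1 ∧ u ∘L adjoint u = 1) ∧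
      ∀ x y, p (toLp 2 (x, y)) =
        toLp 2 ((1 / 2 : 𝕜) • (x - adjoint u y), (1 / 2 : 𝕜) • (-(u x) + y)) := by
  have hadj : adjoint ((-2 : 𝕜) • lowerLeft p) = (-2 : 𝕜) • upperRight p := by
    rw [map_smulₛₗ, adjoint_lowerLeft, hp.isSelfAdjoint.adjoint_eq, map_neg, map_ofNat]
  refine ⟨(-2 : 𝕜) • lowerLeft p, ⟨⟨?_, ?_⟩, fun x y => ?_⟩, fun u ⟨_, hu⟩ => ?_⟩
  · rw [hadj, smul_comp, comp_smul, upperRight_comp_lowerLeft hJ hpJ hp.isIdempotentElem,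
      smul_smul, smul_smul]
    norm_num
  · rw [hadj, smul_comp, comp_smul, lowerLeft_comp_upperRight hJ hpJ hp.isIdempotentElem,
      smul_smul, smul_smul]
    norm_num
  · rw [apply_toLp_block hJ hpJ, hadj]
    congr 2 <;> simp only [smul_apply] <;> module
  · ext x
    have key := congr(($(hu x 0)).snd)
    rw [apply_toLp_inl hJ hpJ] at key
    simp only [toLp_snd] at key
    rw [smul_apply, key]
    module

end Blocks

/-- Let `h` be a bounded self-adjoint operator on `ℂ^{2N} ⊗ H = K ⊕₂ K`
(where `K = ℂ^N ⊗ H` is a Hilbert space) with chiral symmetry `J h J⁻¹ = -h`,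
`J = diag(1_N, -1_N) ⊗ id`, and suppose `0 ∉ Spec(h)`. Let `p = χ_{(-∞,0)}(h)` be the
spectral projection onto the negative spectrum (continuous functional calculus). Then
`p = (1/2)[[1, -u*],[-u, 1]]` for a unique unitary `u` on `K`. -/
theorem stmt_4 {K : Type*} [NormedAddCommGroup K] [InnerProductSpace ℂ K] [CompleteSpace K]
    (J h : WithLp 2 (K × K) →L[ℂ] WithLp 2 (K × K))
    (hJ : ∀ x y : K,
      J ((WithLp.equiv 2 (K × K)).symm (x, y)) = (WithLp.equiv 2 (K × K)).symm (x, -y))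
    (hsa : IsSelfAdjoint h)
    (hchiral : J ∘L h ∘L J = -h)
    (hgap : (0 : ℂ) ∉ spectrum ℂ h)
    (p : WithLp 2 (K × K) →L[ℂ] WithLp 2 (K × K))
    (hp : p = cfc (fun t : ℝ => if t < 0 then (1 : ℝ) else 0) h) :
    ∃! u : K →L[ℂ] K,
      ((ContinuousLinearMap.adjoint u ∘L u = 1 ∧ u ∘L ContinuousLinearMap.adjoint u = 1) ∧
        ∀ x y : K,
          p ((WithLp.equiv 2 (K × K)).symm (x, y)) =
            (WithLp.equiv 2 (K × K)).symm
              ((1 / 2 : ℂ) • (x - (ContinuousLinearMap.adjoint u) y),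
               (1 / 2 : ℂ) • (-(u x) + y))) := by
  have hunit : IsUnit h := (spectrum.zero_notMem_iff ℂ).mp hgap
  have hJsa := isSelfAdjoint_grading hJ
  have hpJ : J * cfc negStep h * J = 1 - cfc negStep h := by
    simpa only [hJsa.star_eq] using conj_cfc_negStep_of_conj_eq_neg hunit hsa
      ⟨J, grading_mem_unitary hJ⟩ (by rw [hJsa.star_eq]; exact hchiral)
  subst hp
  exact (isStarProjection_cfc_negStep hunit).existsUnique_unitary_block hJ hpJ
end

section
/- Let A be a unital C*-algebra generated by a co-isometry s (s s* = 1) with e = 1 − s*s a nonzero projection satisfying s e = 0. Then e A e = ℂ e, i.e., e is a minimal projection in the C*-algebra generated by s and s*. -/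
/-- Let `A` be a unital C*-algebra generated (as a C*-algebra) by a
co-isometry `s` (`s s* = 1`), with `e = 1 - s*s` a nonzero projection satisfying
`s e = 0`. Then `e A e = ℂ e`, i.e. `e` is a minimal projection in `A = C*(s, s*)`. -/
theorem stmt_10 {A : Type*} [NormedRing A] [StarRing A] [CStarRing A] [NormedAlgebra ℂ A]
    [StarModule ℂ A] [CompleteSpace A] (s e : A)
    (h1 : s * star s = 1) (h2 : star s * s = 1 - e)
    (he2 : e = e * e) (hestar : e = star e) (hse : s * e = 0) (hene : e ≠ 0)
    (hgen : (StarAlgebra.adjoin ℂ {s}).topologicalClosure = ⊤) :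
    ∀ x : A, ∃ c : ℂ, e * x * e = c • e := by
  classical
  -- basic relations
  have hes : e * star s = 0 := by
    have h := congrArg star hse
    rw [star_mul, star_zero, ← hestar] at h
    exact h
  have hsne : ∀ n : ℕ, s ^ (n + 1) * e = 0 := by
    intro n; rw [pow_succ, mul_assoc, hse, mul_zero]
  have hesm : ∀ m : ℕ, e * (star s) ^ (m + 1) = 0 := by
    intro m; rw [pow_succ', ← mul_assoc, hes, zero_mul]
  -- the set of monomials
  set M : Set A := {x | ∃ m n : ℕ, x = (star s) ^ m * s ^ n} with hMdef
  -- key computation for monomials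
  have key : ∀ y ∈ M, ∃ c : ℂ, e * y * e = c • e := by
    rintro y ⟨m, n, rfl⟩
    match m, n with
    | 0, 0 => exact ⟨1, by simp [← he2]⟩
    | 0, n + 1 =>
      refine ⟨0, ?_⟩
      rw [pow_zero, one_mul, mul_assoc, hsne n, mul_zero, zero_smul]
    | m + 1, n =>
      refine ⟨0, ?_⟩
      rw [← mul_assoc, hesm m, zero_mul, zero_mul, zero_smul]
  -- reduction lemma
  have hred : ∀ n p : ℕ, s ^ n * (star s) ^ p = (star s) ^ (p - n) * s ^ (n - p) := by
    intro n
    induction n with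
    | zero => intro p; simp
    | succ n ih =>
      intro p
      cases p with
      | zero => simp
      | succ q =>
        have : s ^ (n + 1) * (star s) ^ (q + 1)
            = s ^ n * (s * star s) * (star s) ^ q := by
          rw [pow_succ, pow_succ']
          simp only [mul_assoc]
        rw [this, h1, mul_one, ih q, Nat.succ_sub_succ, Nat.succ_sub_succ]
  -- M is closed under multiplication
  have hmulM : ∀ a ∈ M, ∀ b ∈ M, a * b ∈ M := by
    rintro _ ⟨a, b, rfl⟩ _ ⟨c, d, rfl⟩
    refine ⟨a + (c - b), (b - c) + d, ?_⟩
    calc (star s) ^ a * s ^ b * ((star s) ^ c * s ^ d)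
        = (star s) ^ a * (s ^ b * (star s) ^ c) * s ^ d := by
          simp only [mul_assoc]
      _ = (star s) ^ a * ((star s) ^ (c - b) * s ^ (b - c)) * s ^ d := by rw [hred]
      _ = (star s) ^ (a + (c - b)) * s ^ ((b - c) + d) := by
          rw [pow_add, pow_add]; simp only [mul_assoc]
  -- M is closed under star
  have hstarM : ∀ a ∈ M, star a ∈ M := by
    rintro _ ⟨m, n, rfl⟩
    exact ⟨n, m, by rw [star_mul, star_pow, star_pow, star_star]⟩
  -- span of M is closed under multiplication
  have hmul_span : ∀ a ∈ Submodule.span ℂ M, ∀ b ∈ Submodule.span ℂ M,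
      a * b ∈ Submodule.span ℂ M := by
    intro a ha b hb
    have hab : a * b ∈ Submodule.span ℂ M * Submodule.span ℂ M :=
      Submodule.mul_mem_mul ha hb
    rw [Submodule.span_mul_span] at hab
    refine Submodule.span_le.2 ?_ hab
    rintro z hz
    rw [Set.mem_mul] at hz
    obtain ⟨u, hu, v, hv, rfl⟩ := hz
    exact Submodule.subset_span (hmulM u hu v hv)
  -- span of M is closed under star
  have hstar_span : ∀ a ∈ Submodule.span ℂ M, star a ∈ Submodule.span ℂ M := by
    intro a ha
    induction ha using Submodule.span_induction with
    | mem z hz => exact Submodule.subset_span (hstarM z hz)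
    | zero => simp
    | add u v _ _ hu hv => rw [star_add]; exact Submodule.add_mem _ hu hv
    | smul c u _ hu => rw [star_smul]; exact Submodule.smul_mem _ _ hu
  -- the adjoin is contained in the span of M
  have hadj : ∀ y ∈ StarAlgebra.adjoin ℂ ({s} : Set A), y ∈ Submodule.span ℂ M := by
    intro y hy
    induction hy using StarAlgebra.adjoin_induction with
    | mem z hz =>
      rcases hz with rfl
      exact Submodule.subset_span ⟨0, 1, by simp⟩
    | algebraMap c =>
      have h1M : (1 : A) ∈ M := ⟨0, 0, by simp⟩
      rw [Algebra.algebraMap_eq_smul_one]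
      exact Submodule.smul_mem _ _ (Submodule.subset_span h1M)
    | add u v _ _ hu hv => exact Submodule.add_mem _ hu hv
    | mul u v _ _ hu hv => exact hmul_span u hu v hv
    | star u _ hu => exact hstar_span u hu
  -- the target set is a closed submodule containing M
  have hSclosed : IsClosed {x : A | ∃ c : ℂ, e * x * e = c • e} := by
    have h1c : Continuous fun x : A => e * x * e :=
      (continuous_const.mul continuous_id).mul continuous_const
    have h2c : IsClosed ((Submodule.span ℂ ({e} : Set A) : Submodule ℂ A) : Set A) :=
      Submodule.closed_of_finiteDimensional _
    have hset : {x : A | ∃ c : ℂ, e * x * e = c • e}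
        = (fun x => e * x * e) ⁻¹' (Submodule.span ℂ ({e} : Set A) : Set A) := by
      ext x
      simp only [Set.mem_setOf_eq, Set.mem_preimage, SetLike.mem_coe,
        Submodule.mem_span_singleton]
      exact ⟨fun ⟨c, hc⟩ => ⟨c, hc.symm⟩, fun ⟨c, hc⟩ => ⟨c, hc.symm⟩⟩
    rw [hset]
    exact h2c.preimage h1c
  -- the target set is a submodule, so contains span M
  have hspan_sub : ∀ y ∈ Submodule.span ℂ M, ∃ c : ℂ, e * y * e = c • e := by
    intro y hy
    induction hy using Submodule.span_induction with
    | mem z hz => exact key z hz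
    | zero => exact ⟨0, by simp⟩
    | add u v _ _ hu hv =>
      obtain ⟨c, hc⟩ := hu; obtain ⟨d, hd⟩ := hv
      exact ⟨c + d, by rw [mul_add, add_mul, hc, hd, add_smul]⟩
    | smul r u _ hu =>
      obtain ⟨c, hc⟩ := hu
      exact ⟨r * c, by rw [mul_smul_comm, smul_mul_assoc, hc, smul_smul]⟩
  -- conclude
  intro x
  have hx : x ∈ closure ((StarAlgebra.adjoin ℂ ({s} : Set A) : Set A)) := by
    have : x ∈ (StarAlgebra.adjoin ℂ ({s} : Set A)).topologicalClosure := by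
      rw [hgen]; trivial
    exact this
  have hsub : (StarAlgebra.adjoin ℂ ({s} : Set A) : Set A)
      ⊆ {x : A | ∃ c : ℂ, e * x * e = c • e} := by
    intro y hy
    exact hspan_sub y (hadj y hy)
  exact closure_minimal hsub hSclosed hx
end
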